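/- Let G be an ADMG whose c-components are partitioned into h-nodes H_1, …, H_n forming an H-graph (a DAG) with a topological order. Suppose for each h-node H_k there is a set 𝒜_k ⊆ An_G(H_k)\H_k satisfying the modularity condition, with 𝒜_k contained in the union of h-nodes preceding H_k in the topological order. If a model Q (induced by an SCM on G) satisfies, for every k, Q(H_k ∪ 𝒜_k | do(Pa(H_k ∪ 𝒜_k))) = P(H_k ∪ 𝒜_k | Pa(H_k ∪ 𝒜_k)) for the true strictly positive SCM P, then Q(𝒱) = P(𝒱). -/

import Mathlib

/-!
For a model `N`, intervening on `Pa(W)` turns the law of `W` into the c-factor `N[W]`, the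
probability that the mechanisms of `W` reproduce the given values. By the modularity condition
both sides of the matching hypothesis are c-factors, so `Q[H_k ∪ 𝒜_k] = P[H_k ∪ 𝒜_k]`. Distinct
h-nodes read disjoint sets of independent latents, so every c-factor is the product of its
restrictions to the h-nodes. Summing out childless vertices gives `Q[D] = P[D]` for every ancestral
`D ⊆ W`; removing the vertices of `D` one at a time from the bottom and cancelling the positive
factors of `P` on the other h-nodes isolates `Q[D ∩ H_j] = P[D ∩ H_j]`. For `D = W = H_k ∪ 𝒜_k`
this gives `Q[H_k] = P[H_k]`, and both joints are the products of these c-factors.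
-/

open Classical

noncomputable section

/-- An acyclic directed mixed graph (ADMG): directed edges (causal) and
bidirected edges (latent confounders). -/
structure ADMG (V : Type) where
  dir : V → V → Prop
  bidir : V → V → Prop
  bidir_symm : ∀ a b, bidir a b → bidir b a
  acyclic : ∀ v, ¬ Relation.TransGen dir v v

namespace ADMG

variable {V : Type} [Fintype V] [DecidableEq V]

/-- Observed parents of a set `W`, outside `W`. -/
def parents (G : ADMG V) (W : Set V) : Set V :=
  {v | v ∉ W ∧ ∃ w ∈ W, G.dir v w}

/-- Observed parents of a finite set `W`, outside `W`. -/
def parentsF (G : ADMG V) (W : Finset V) : Finset V :=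
  Finset.univ.filter fun v => v ∉ W ∧ ∃ w ∈ W, G.dir v w

/-- Ancestors of a set `W` (including `W` itself). -/
def ancestors (G : ADMG V) (W : Set V) : Set V :=
  {v | ∃ w ∈ W, Relation.ReflTransGen G.dir v w}

/-- Ancestors of a finite set `W` (including `W` itself). -/
def ancestorsF (G : ADMG V) (W : Finset V) : Finset V :=
  Finset.univ.filter fun v => ∃ w ∈ W, Relation.ReflTransGen G.dir v w

/-- Bidirected connectivity (paths of bidirected edges). -/
def biConn (G : ADMG V) (a b : V) : Prop :=
  Relation.ReflTransGen G.bidir a b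

/-- `C` is a c-component of `G`: a maximal bidirected-connected set. -/
def isCComponent (G : ADMG V) (C : Set V) : Prop :=
  C.Nonempty ∧ (∀ a ∈ C, ∀ b ∈ C, G.biConn a b) ∧
    ∀ a ∈ C, ∀ b, G.biConn a b → b ∈ C

/-- The set of c-components of `G`. -/
def cComponents (G : ADMG V) : Set (Set V) := {C | G.isCComponent C}

/-- The graph after `do(I)`: incoming directed edges into `I` and bidirected
edges incident to `I` are removed. -/
def doGraph (G : ADMG V) (I : Set V) : ADMG V where
  dir a b := G.dir a b ∧ b ∉ I
  bidir a b := G.bidir a b ∧ a ∉ I ∧ b ∉ I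
  bidir_symm := fun a b h => ⟨G.bidir_symm a b h.1, h.2.2, h.2.1⟩
  acyclic := fun v h => G.acyclic v (Relation.TransGen.mono (fun _ _ hx => hx.1) _ _ h)

/-- The graph with all outgoing directed edges of `X` removed. -/
def underGraph (G : ADMG V) (X : Set V) : ADMG V where
  dir a b := G.dir a b ∧ a ∉ X
  bidir := G.bidir
  bidir_symm := G.bidir_symm
  acyclic := fun v h => G.acyclic v (Relation.TransGen.mono (fun _ _ hx => hx.1) _ _ h)

/-- The induced sub-graph on a vertex set `S`. -/
def induced (G : ADMG V) (S : Set V) : ADMG V where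
  dir a b := G.dir a b ∧ a ∈ S ∧ b ∈ S
  bidir a b := G.bidir a b ∧ a ∈ S ∧ b ∈ S
  bidir_symm := fun a b h => ⟨G.bidir_symm a b h.1, h.2.2, h.2.1⟩
  acyclic := fun v h => G.acyclic v (Relation.TransGen.mono (fun _ _ hx => hx.1) _ _ h)

/-- Adjacency in the mixed graph. -/
def adjacent (G : ADMG V) (a b : V) : Prop := G.dir a b ∨ G.dir b a ∨ G.bidir a b

/-- The edge between `a` and `b` points into `b`. -/
def intoEdge (G : ADMG V) (a b : V) : Prop := G.dir a b ∨ G.bidir a b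

/-- `b` is a collider on the consecutive triple `a, b, c`. -/
def isCollider (G : ADMG V) (a b c : V) : Prop := G.intoEdge a b ∧ G.intoEdge c b

/-- A walk (list of vertices) that is active given the conditioning set `Z`:
non-colliders avoid `Z`, colliders have a descendant in `Z`. -/
def ActiveWalk (G : ADMG V) (Z : Set V) (p : List V) : Prop :=
  p.Chain' G.adjacent ∧
    ∀ i a b c, p[i]? = some a → p[i + 1]? = some b → p[i + 2]? = some c →
      (G.isCollider a b c → ∃ z ∈ Z, Relation.ReflTransGen G.dir b z) ∧
      (¬ G.isCollider a b c → b ∉ Z)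

/-- d-connection of `X` and `Y` given `Z` in the mixed graph (m-connection). -/
def dConnected (G : ADMG V) (X Y Z : Set V) : Prop :=
  ∃ p : List V, G.ActiveWalk Z p ∧
    (∃ x ∈ X, p.head? = some x) ∧ ∃ y ∈ Y, p.getLast? = some y

/-- d-separation of `X` and `Y` given `Z`. -/
def dSeparated (G : ADMG V) (X Y Z : Set V) : Prop := ¬ G.dConnected X Y Z

end ADMG

/-- A (semi-Markovian) structural causal model over the ADMG `G`, with observed
variables valued in `Val`: independent finite latents `L`, mechanisms `f`
reading only observed parents and own latents (shared latents forcing a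
bidirected edge), and the solution map of the structural equations under an
intervention. -/
structure SCM (V : Type) (Val : Type) [Fintype V] [DecidableEq V] [Fintype Val]
    (G : ADMG V) where
  L : Type
  [fintL : Fintype L]
  [decL : DecidableEq L]
  NVal : Type
  [fintN : Fintype NVal]
  ν : L → NVal → ℝ
  ν_nonneg : ∀ l x, 0 ≤ ν l x
  ν_sum : ∀ l, ∑ x, ν l x = 1
  reads : V → L → Prop
  semiMarkov : ∀ v w l, v ≠ w → reads v l → reads w l → G.bidir v w
  f : V → (V → Val) → (L → NVal) → Val
  f_parents : ∀ v x y ω, (∀ p, G.dir p v → x p = y p) → f v x ω = f v y ω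
  f_latents : ∀ v x ω ω', (∀ l, reads v l → ω l = ω' l) → f v x ω = f v x ω'
  solve : Finset V → (V → Val) → (L → NVal) → V → Val
  solve_spec : ∀ I x ω v,
    solve I x ω v = if v ∈ I then x v else f v (solve I x ω) ω

namespace SCM

attribute [instance] SCM.fintL SCM.decL SCM.fintN

variable {V Val : Type} [Fintype V] [DecidableEq V] [Fintype Val] {G : ADMG V}

/-- Probability of a full latent configuration (latents are independent). -/
def μ (M : SCM V Val G) (ω : M.L → M.NVal) : ℝ := ∏ l, M.ν l (ω l)

/-- The interventional distribution `P(y | do(I := x))` (observational for `I = ∅`). -/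
def P (M : SCM V Val G) (I : Finset V) (x : V → Val) (y : V → Val) : ℝ :=
  ∑ ω : M.L → M.NVal, if M.solve I x ω = y then M.μ ω else 0

/-- The marginal interventional distribution `P(S = y|_S | do(I := x))`. -/
def Pm (M : SCM V Val G) (I : Finset V) (x : V → Val) (S : Finset V) (y : V → Val) : ℝ :=
  ∑ z : V → Val, if ∀ v ∈ S, z v = y v then M.P I x z else 0

/-- The conditional distribution `P(S = y|_S | C = y|_C, do(I := x))`. -/
def cond (M : SCM V Val G) (I : Finset V) (x : V → Val) (S C : Finset V)
    (y : V → Val) : ℝ :=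
  M.Pm I x (S ∪ C) y / M.Pm I x C y

/-- Strict positivity of the induced observational distribution. -/
def positive (M : SCM V Val G) : Prop := ∀ x y, 0 < M.P ∅ x y

end SCM

end


/-- H-graph edge: `Hs → Ht` iff intervening and conditioning on the parents of
`Ht` contained in `Hs` differ for `Ht` (do-calculus rule 2 fails). -/
def hEdge {V Val : Type} [Fintype V] [DecidableEq V] [Fintype Val] {G : ADMG V}
    (M : SCM V Val G) (Hs Ht : Finset V) : Prop :=
  Hs ≠ Ht ∧ ∃ y : V → Val,
    M.Pm (G.parentsF Ht ∩ Hs) y Ht y ≠ M.cond ∅ y Ht (G.parentsF Ht ∩ Hs) y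

theorem sum_prod_eq_one {ι Ω : Type*} [Fintype ι] [DecidableEq ι] [Fintype Ω] {g : ι → Ω → ℝ}
    (hg : ∀ i, ∑ x, g i x = 1) : ∑ ω : ι → Ω, ∏ i, g i (ω i) = 1 := by
  simp [← Fintype.prod_sum, hg]

theorem sum_prod_mul_mul_eq_of_dependsOn {ι Ω : Type*} [Fintype ι] [DecidableEq ι] [Fintype Ω]
    {g : ι → Ω → ℝ} (hg : ∀ i, ∑ x, g i x = 1) {s : Set ι} {F K : (ι → Ω) → ℝ}
    (hF : DependsOn F s) (hK : DependsOn K sᶜ) :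
    ∑ ω : ι → Ω, (∏ i, g i (ω i)) * (F ω * K ω) =
      (∑ ω : ι → Ω, (∏ i, g i (ω i)) * F ω) * ∑ ω : ι → Ω, (∏ i, g i (ω i)) * K ω := by
  classical
  let e := Equiv.piEquivPiSubtypeProd (· ∈ s) fun _ => Ω
  have e_in a b i (hi : i ∈ s) : e.symm (a, b) i = a ⟨i, hi⟩ := dif_pos hi
  have e_out a b i (hi : i ∉ s) : e.symm (a, b) i = b ⟨i, hi⟩ := dif_neg hi
  have hsum (X : (ι → Ω) → ℝ) : ∑ ω, X ω = ∑ a, ∑ b, X (e.symm (a, b)) := by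
    rw [← e.symm.sum_comp, Fintype.sum_prod_type]
  set wA : ({i // i ∈ s} → Ω) → ℝ := fun a => ∏ i : {i // i ∈ s}, g i (a i)
  set wB : ({i // i ∉ s} → Ω) → ℝ := fun b => ∏ i : {i // i ∉ s}, g i (b i)
  have hw a b : ∏ i, g i (e.symm (a, b) i) = wA a * wB b := by
    rw [← Fintype.prod_subtype_mul_prod_subtype (· ∈ s)]
    congr 1 <;> refine Finset.prod_congr rfl fun i _ => ?_
    · rw [e_in _ _ _ i.2]
    · rw [e_out _ _ _ i.2]
  -- the weights sum to one, so `ι → Ω` is inhabited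
  obtain ⟨ω₀, -, -⟩ := Finset.exists_ne_zero_of_sum_ne_zero
    (by rw [sum_prod_eq_one hg]; exact one_ne_zero)
  obtain ⟨F', hFe⟩ : ∃ F' : _ → ℝ, ∀ a b, F (e.symm (a, b)) = F' a :=
    ⟨fun a => F (e.symm (a, fun i => ω₀ i)), fun a b => hF fun i hi => by
      rw [e_in _ _ _ hi, e_in _ _ _ hi]⟩
  obtain ⟨K', hKe⟩ : ∃ K' : _ → ℝ, ∀ a b, K (e.symm (a, b)) = K' b :=
    ⟨fun b => K (e.symm (fun i => ω₀ i, b)), fun a b => hK fun i hi => by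
      rw [e_out _ _ _ hi, e_out _ _ _ hi]⟩
  have hA : ∑ a, wA a = 1 := sum_prod_eq_one fun i => hg i
  have hB : ∑ b, wB b = 1 := sum_prod_eq_one fun i => hg i
  have hFK : ∑ ω, (∏ i, g i (ω i)) * (F ω * K ω) = (∑ a, wA a * F' a) * ∑ b, wB b * K' b := by
    rw [hsum, Fintype.sum_mul_sum]
    simp only [hw, hFe, hKe, mul_mul_mul_comm]
  have hF1 : ∑ ω, (∏ i, g i (ω i)) * F ω = ∑ a, wA a * F' a := by
    rw [hsum, ← mul_one (∑ a, wA a * F' a), ← hB, Fintype.sum_mul_sum]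
    simp only [hw, hFe, mul_right_comm]
  have hK1 : ∑ ω, (∏ i, g i (ω i)) * K ω = ∑ b, wB b * K' b := by
    rw [hsum, ← one_mul (∑ b, wB b * K' b), ← hA, Fintype.sum_mul_sum]
    simp only [hw, hKe, mul_assoc]
  rw [hFK, hF1, hK1]

namespace ADMG

variable {V : Type} (G : ADMG V)

structure IsCPartition {ι : Type*} (H : ι → Finset V) : Prop where
  disjoint : ∀ j k, j ≠ k → Disjoint (H j) (H k)
  cover : ∀ v, ∃ k, v ∈ H k
  closed : ∀ k, ∀ K : Set V, G.isCComponent K → (K ∩ ↑(H k)).Nonempty → K ⊆ ↑(H k)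

def IsAncestralIn (W D : Finset V) : Prop :=
  D ⊆ W ∧ ∀ u ∈ W, ∀ v ∈ D, G.dir u v → u ∈ D

theorem not_dir_self (v : V) : ¬ G.dir v v :=
  fun h => G.acyclic v (.single h)

theorem wellFounded_dir [Finite V] : WellFounded G.dir :=
  have : IsTrans V (Relation.TransGen G.dir) := ⟨fun _ _ _ => .trans⟩
  have : Std.Irrefl (Relation.TransGen G.dir) := ⟨G.acyclic⟩
  Subrelation.wf Relation.TransGen.single (Finite.wellFounded_of_trans_of_irrefl _)

theorem wellFounded_flip_dir [Finite V] : WellFounded (flip G.dir) :=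
  have : IsTrans V (Relation.TransGen (flip G.dir)) := ⟨fun _ _ _ => .trans⟩
  have : Std.Irrefl (Relation.TransGen (flip G.dir)) :=
    ⟨fun v h => G.acyclic v (Relation.transGen_swap.mp h)⟩
  Subrelation.wf Relation.TransGen.single (Finite.wellFounded_of_trans_of_irrefl _)

theorem isCComponent_biConn (v : V) : G.isCComponent {b | G.biConn v b} := by
  have : Std.Symm G.bidir := ⟨G.bidir_symm⟩
  exact ⟨⟨v, .refl⟩, fun a ha b hb => (Std.Symm.symm _ _ ha).trans hb,
    fun a ha b hab => ha.trans hab⟩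

section Parents

variable [Fintype V] [DecidableEq V]

@[simp]
theorem mem_parentsF {W : Finset V} {p : V} :
    p ∈ G.parentsF W ↔ p ∉ W ∧ ∃ w ∈ W, G.dir p w := by
  simp [parentsF]

theorem parentsF_univ : G.parentsF Finset.univ = ∅ := by
  ext; simp

theorem disjoint_parentsF (W : Finset V) : Disjoint W (G.parentsF W) :=
  Finset.disjoint_left.mpr fun _ hv hp => ((G.mem_parentsF).mp hp).1 hv

end Parents

variable {G}

theorem isAncestralIn_refl (W : Finset V) : G.IsAncestralIn W W :=
  ⟨subset_rfl, fun _ hu _ _ _ => hu⟩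

variable [DecidableEq V] {W D : Finset V} {u : V}

theorem IsAncestralIn.insert (hD : G.IsAncestralIn W D) (hu : u ∈ W)
    (hmin : ∀ w ∈ W \ D, ¬ G.dir w u) : G.IsAncestralIn W (insert u D) := by
  refine ⟨Finset.insert_subset hu hD.1, fun w hw v hv hwv => ?_⟩
  rcases Finset.mem_insert.mp hv with rfl | hvD
  · by_contra hwD
    exact hmin w (Finset.mem_sdiff.mpr ⟨hw, fun h => hwD (Finset.mem_insert_of_mem h)⟩) hwv
  · exact Finset.mem_insert_of_mem (hD.2 w hw v hvD hwv)

theorem IsAncestralIn.erase (hD : G.IsAncestralIn W D) (hmax : ∀ v ∈ D, ¬ G.dir u v) :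
    G.IsAncestralIn W (D.erase u) := by
  refine ⟨(Finset.erase_subset u D).trans hD.1, fun w hw v hv hwv => ?_⟩
  have hvD := Finset.mem_of_mem_erase hv
  exact Finset.mem_erase.mpr ⟨by rintro rfl; exact hmax v hvD hwv, hD.2 w hw v hvD hwv⟩

end ADMG

namespace SCM

variable {V Val : Type} [Fintype V] [DecidableEq V] [Fintype Val] {G : ADMG V}
  (N : SCM V Val G)

/-- Tian's c-factor `N[B](y) = N(B = y_B | do(V \ B := y))`, read off the mechanisms. -/
noncomputable def cFactor (B : Finset V) (y : V → Val) : ℝ :=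
  ∑ ω, if ∀ v ∈ B, N.f v y ω = y v then N.μ ω else 0

def LatentSeparated (B C : Finset V) : Prop :=
  ∀ v ∈ B, ∀ w ∈ C, ∀ l, N.reads v l → ¬ N.reads w l

theorem μ_nonneg (ω : N.L → N.NVal) : 0 ≤ N.μ ω :=
  Finset.prod_nonneg fun l _ => N.ν_nonneg l (ω l)

theorem cFactor_empty (y : V → Val) : N.cFactor ∅ y = 1 := by
  simpa [cFactor, μ] using sum_prod_eq_one N.ν_sum

theorem cFactor_anti {B B' : Finset V} (h : B ⊆ B') (y : V → Val) :
    N.cFactor B' y ≤ N.cFactor B y :=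
  Finset.sum_le_sum fun ω _ => by
    split_ifs with h' h''
    · rfl
    · exact absurd (fun v hv => h' v (h hv)) h''
    · exact N.μ_nonneg ω
    · rfl

theorem solve_eq_on_iff {I S : Finset V} (hSI : Disjoint S I) (hpa : G.parentsF S ⊆ I)
    (y : V → Val) (ω : N.L → N.NVal) :
    (∀ v ∈ S, N.solve I y ω v = y v) ↔ ∀ v ∈ S, N.f v y ω = y v := by
  have key : ∀ v ∈ S, (∀ p, G.dir p v → p ∈ S → N.solve I y ω p = y p) →
      N.solve I y ω v = N.f v y ω := by
    intro v hv h
    rw [N.solve_spec, if_neg (Finset.disjoint_left.mp hSI hv)]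
    refine N.f_parents _ _ _ _ fun p hp => ?_
    by_cases hpS : p ∈ S
    · exact h p hp hpS
    · rw [N.solve_spec, if_pos (hpa ((G.mem_parentsF).mpr ⟨hpS, v, hv, hp⟩))]
  constructor
  · intro h v hv
    rw [← key v hv fun p _ hp => h p hp, h v hv]
  · intro h v
    induction v using G.wellFounded_dir.induction with
    | _ v ih => exact fun hv => by rw [key v hv fun p hpv hpS => ih p hpv hpS, h v hv]

theorem Pm_eq_cFactor {I S : Finset V} (hSI : Disjoint S I) (hpa : G.parentsF S ⊆ I)
    (y : V → Val) : N.Pm I y S y = N.cFactor S y := by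
  rw [Pm, ← Finset.sum_filter]
  unfold P
  rw [Finset.sum_comm]
  simp only [Finset.sum_ite_eq, Finset.mem_filter, Finset.mem_univ, true_and,
    N.solve_eq_on_iff hSI hpa, cFactor]

theorem Pm_univ (I : Finset V) (x y : V → Val) : N.Pm I x Finset.univ y = N.P I x y := by
  simp [Pm, ← funext_iff]

theorem P_empty_self_eq_cFactor_univ (y : V → Val) : N.P ∅ y y = N.cFactor Finset.univ y := by
  rw [← Pm_univ, N.Pm_eq_cFactor (Finset.disjoint_empty_right _) G.parentsF_univ.subset]

theorem cFactor_pos (hpos : N.positive) (B : Finset V) (y : V → Val) : 0 < N.cFactor B y :=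
  (N.P_empty_self_eq_cFactor_univ y ▸ hpos y y).trans_le (N.cFactor_anti B.subset_univ y)

theorem sum_cFactor_insert_update {u : V} {B : Finset V} (hu : u ∉ B)
    (hch : ∀ v ∈ B, ¬ G.dir u v) (y : V → Val) :
    ∑ c, N.cFactor (insert u B) (Function.update y u c) = N.cFactor B y := by
  unfold cFactor
  rw [Finset.sum_comm]
  refine Finset.sum_congr rfl fun ω _ => ?_
  have hf c : ∀ v ∈ insert u B, N.f v (Function.update y u c) ω = N.f v y ω := by
    refine fun v hv => N.f_parents _ _ _ _ fun p hp => Function.update_of_ne ?_ _ _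
    rintro rfl
    rcases Finset.mem_insert.mp hv with rfl | hvB
    exacts [G.not_dir_self _ hp, hch v hvB hp]
  have hcond c : (∀ v ∈ insert u B, N.f v (Function.update y u c) ω = Function.update y u c v) ↔
      (N.f u y ω = c ∧ ∀ v ∈ B, N.f v y ω = y v) := by
    rw [Finset.forall_mem_insert, hf c u (Finset.mem_insert_self u B), Function.update_self]
    refine and_congr Iff.rfl (forall₂_congr fun v hv => ?_)
    rw [hf c v (Finset.mem_insert_of_mem hv), Function.update_of_ne (ne_of_mem_of_not_mem hv hu)]
  simp only [hcond, ite_and, Finset.sum_ite_eq, Finset.mem_univ, if_true]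

theorem dependsOn_reads (B : Finset V) (y : V → Val) :
    DependsOn (fun ω => if ∀ v ∈ B, N.f v y ω = y v then (1 : ℝ) else 0)
      {l | ∃ v ∈ B, N.reads v l} := fun ω ω' h => by
  have hf : ∀ v ∈ B, N.f v y ω = N.f v y ω' :=
    fun v hv => N.f_latents _ _ _ _ fun l hl => h l ⟨v, hv, hl⟩
  exact if_congr (forall₂_congr fun v hv => by rw [hf v hv]) rfl rfl

theorem cFactor_union {B C : Finset V} (hBC : N.LatentSeparated B C) (y : V → Val) :
    N.cFactor (B ∪ C) y = N.cFactor B y * N.cFactor C y := by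
  have hind D : N.cFactor D y =
      ∑ ω, (∏ l, N.ν l (ω l)) * if ∀ v ∈ D, N.f v y ω = y v then 1 else 0 := by
    simp [cFactor, μ, mul_ite]
  have hC : {l | ∃ w ∈ C, N.reads w l} ⊆ {l | ∃ v ∈ B, N.reads v l}ᶜ :=
    fun l ⟨w, hw, hwl⟩ ⟨v, hv, hvl⟩ => hBC v hv w hw l hvl hwl
  rw [hind, hind, hind, ← sum_prod_mul_mul_eq_of_dependsOn N.ν_sum (N.dependsOn_reads B y)
    ((N.dependsOn_reads C y).mono hC)]
  simp only [Finset.forall_mem_union, ite_zero_mul_ite_zero, mul_one]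

variable {N} in
theorem LatentSeparated.mono {B B' C C' : Finset V} (h : N.LatentSeparated B C) (hB : B' ⊆ B)
    (hC : C' ⊆ C) : N.LatentSeparated B' C' :=
  fun v hv w hw => h v (hB hv) w (hC hw)

theorem cFactor_biUnion {ι : Type*} {s : Finset ι} {B : ι → Finset V}
    (hs : (s : Set ι).Pairwise fun i j => N.LatentSeparated (B i) (B j)) (y : V → Val) :
    N.cFactor (s.biUnion B) y = ∏ i ∈ s, N.cFactor (B i) y := by
  classical
  induction s using Finset.induction_on with
  | empty => simp [cFactor_empty]
  | insert i s hi ih =>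
    rw [Finset.coe_insert, Set.pairwise_insert] at hs
    rw [Finset.biUnion_insert, Finset.prod_insert hi, N.cFactor_union, ih hs.1]
    intro v hv w hw
    obtain ⟨j, hj, hwj⟩ := Finset.mem_biUnion.mp hw
    exact (hs.2 j hj (ne_of_mem_of_not_mem hj hi).symm).1 v hv w hwj

theorem latentSeparated_of_disjoint {B C : Finset V} (hBC : Disjoint B C)
    (hB : ∀ K : Set V, G.isCComponent K → (K ∩ ↑B).Nonempty → K ⊆ ↑B) :
    N.LatentSeparated B C := by
  intro v hv w hw l hvl hwl
  have hvw : v ≠ w := ne_of_mem_of_not_mem hv (Finset.disjoint_right.mp hBC hw)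
  have hwB : w ∈ B := hB _ (G.isCComponent_biConn v) ⟨v, .refl, hv⟩
    (.single (N.semiMarkov v w l hvw hvl hwl))
  exact Finset.disjoint_left.mp hBC hwB hw

theorem cFactor_eq_prod_inter {ι : Type*} [Fintype ι] {H : ι → Finset V} (hH : G.IsCPartition H)
    (D : Finset V) (y : V → Val) : N.cFactor D y = ∏ j, N.cFactor (D ∩ H j) y := by
  have hD : Finset.univ.biUnion (fun j => D ∩ H j) = D := by
    ext v
    simpa using fun _ => hH.cover v
  rw [← N.cFactor_biUnion _ y, hD]
  exact fun j _ k _ hjk => (N.latentSeparated_of_disjoint (hH.disjoint j k hjk) (hH.closed j)).mono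
    Finset.inter_subset_right Finset.inter_subset_right

variable {M Q : SCM V Val G}

theorem cFactor_eq_of_isAncestralIn {W D : Finset V} (hW : ∀ y, Q.cFactor W y = M.cFactor W y)
    (hD : G.IsAncestralIn W D) (y : V → Val) : Q.cFactor D y = M.cFactor D y := by
  induction hk : (W \ D).card generalizing D y with
  | zero =>
    rw [Finset.card_eq_zero, Finset.sdiff_eq_empty_iff_subset] at hk
    rw [hD.1.antisymm hk]
    exact hW y
  | succ k ih =>
    obtain ⟨u, hu, hmin⟩ := G.wellFounded_dir.has_min (↑(W \ D) : Set V)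
      (Finset.coe_nonempty.mpr (Finset.card_pos.mp (by rw [hk]; exact k.succ_pos)))
    obtain ⟨huW, huD⟩ := Finset.mem_sdiff.mp hu
    have hch : ∀ v ∈ D, ¬ G.dir u v := fun v hv huv => huD (hD.2 u huW v hv huv)
    rw [← Q.sum_cFactor_insert_update huD hch, ← M.sum_cFactor_insert_update huD hch]
    refine Finset.sum_congr rfl fun c _ => ih (hD.insert huW hmin) _ ?_
    rw [Finset.sdiff_insert, Finset.card_erase_of_mem hu, hk, k.add_sub_cancel]

theorem cFactor_inter_eq_of_isAncestralIn {ι : Type*} [Fintype ι] {H : ι → Finset V}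
    (hH : G.IsCPartition H) (hpos : M.positive) {W D : Finset V}
    (hW : ∀ y, Q.cFactor W y = M.cFactor W y) (hD : G.IsAncestralIn W D) (j : ι)
    (y : V → Val) : Q.cFactor (D ∩ H j) y = M.cFactor (D ∩ H j) y := by
  classical
  induction D using Finset.strongInduction generalizing j with | H D ih => ?_
  rcases D.eq_empty_or_nonempty with rfl | hne
  · simp [cFactor_empty]
  obtain ⟨u, hu, hmax⟩ :=
    G.wellFounded_flip_dir.has_min (↑D : Set V) (Finset.coe_nonempty.mpr hne)
  have ih' i := ih (D.erase u) (Finset.erase_ssubset hu) (hD.erase hmax) i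
  obtain ⟨k, huk⟩ := hH.cover u
  have hother i (hik : i ≠ k) : D ∩ H i = D.erase u ∩ H i := by
    rw [Finset.erase_inter, Finset.erase_eq_of_notMem fun h =>
      Finset.disjoint_left.mp (hH.disjoint i k hik) (Finset.mem_inter.mp h).2 huk]
  rcases ne_or_eq j k with hjk | rfl
  · rw [hother j hjk]
    exact ih' j
  -- the other blocks of `D` are matched by induction, and positive under `M`: cancel them
  have hrest : ∏ i ∈ Finset.univ.erase j, Q.cFactor (D ∩ H i) y =
      ∏ i ∈ Finset.univ.erase j, M.cFactor (D ∩ H i) y :=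
    Finset.prod_congr rfl fun i hi => by rw [hother i (Finset.ne_of_mem_erase hi), ih' i]
  refine mul_right_cancel₀ (b := ∏ i ∈ Finset.univ.erase j, M.cFactor (D ∩ H i) y)
    (Finset.prod_pos fun i _ => M.cFactor_pos hpos _ y).ne' ?_
  calc Q.cFactor (D ∩ H j) y * ∏ i ∈ Finset.univ.erase j, M.cFactor (D ∩ H i) y
      = Q.cFactor D y := by
        rw [← hrest, Finset.mul_prod_erase _ (fun i => Q.cFactor (D ∩ H i) y) (Finset.mem_univ j),
          Q.cFactor_eq_prod_inter hH]
    _ = M.cFactor D y := cFactor_eq_of_isAncestralIn hW hD y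
    _ = M.cFactor (D ∩ H j) y * ∏ i ∈ Finset.univ.erase j, M.cFactor (D ∩ H i) y := by
        rw [Finset.mul_prod_erase _ (fun i => M.cFactor (D ∩ H i) y) (Finset.mem_univ j),
          M.cFactor_eq_prod_inter hH]

end SCM

theorem modular_training_matches_joint_general
    {V Val : Type} [Fintype V] [DecidableEq V] [Fintype Val]
    (G : ADMG V) {n : ℕ} (H : Fin n → Finset V)
    (hpdisj : ∀ j k, j ≠ k → Disjoint (H j) (H k))
    (hpcover : ∀ v : V, ∃ k, v ∈ H k)
    (hccu : ∀ k, ∀ Cc : Set V, G.isCComponent Cc → (Cc ∩ ↑(H k)).Nonempty → Cc ⊆ ↑(H k))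
    (A : Fin n → Finset V)
    (M Q : SCM V Val G) (hpos : M.positive)
    (hmod : ∀ k, ∀ y : V → Val,
      M.Pm (G.parentsF (H k ∪ A k)) y (H k ∪ A k) y =
        M.cond ∅ y (H k ∪ A k) (G.parentsF (H k ∪ A k)) y)
    (hmatch : ∀ k, ∀ y : V → Val,
      Q.Pm (G.parentsF (H k ∪ A k)) y (H k ∪ A k) y =
        M.cond ∅ y (H k ∪ A k) (G.parentsF (H k ∪ A k)) y) :
    ∀ y : V → Val, Q.P ∅ y y = M.P ∅ y y := by
  have hH : G.IsCPartition H := ⟨hpdisj, hpcover, hccu⟩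
  have hmatched k y : Q.cFactor (H k ∪ A k) y = M.cFactor (H k ∪ A k) y := by
    have hdisj := G.disjoint_parentsF (H k ∪ A k)
    rw [← Q.Pm_eq_cFactor hdisj subset_rfl, ← M.Pm_eq_cFactor hdisj subset_rfl, hmatch, hmod]
  have hblock k y : Q.cFactor (H k) y = M.cFactor (H k) y := by
    simpa using SCM.cFactor_inter_eq_of_isAncestralIn hH hpos (hmatched k)
      (G.isAncestralIn_refl _) k y
  intro y
  rw [Q.P_empty_self_eq_cFactor_univ, M.P_empty_self_eq_cFactor_univ,
    Q.cFactor_eq_prod_inter hH, M.cFactor_eq_prod_inter hH]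
  simp only [Finset.univ_inter, hblock]

/-- modular training matches the joint: if the h-nodes `H k`
partition the c-components into an H-graph whose topological order is the index
order, each `𝒜 k ⊆ An(H k) \ H k` satisfies the modularity condition and lies
in earlier h-nodes, and the model `Q` matches the observational conditional
`P(H k ∪ 𝒜 k | Pa(H k ∪ 𝒜 k))` of the true strictly positive SCM `M` as its
interventional distribution `Q(H k ∪ 𝒜 k | do(Pa(H k ∪ 𝒜 k)))` for every `k`,
then `Q(𝒱) = P(𝒱)`. -/
theorem modular_training_matches_joint
    {V Val : Type} [Fintype V] [DecidableEq V] [Fintype Val]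
    (G : ADMG V) {n : ℕ} (H : Fin n → Finset V)
    (hpdisj : ∀ j k, j ≠ k → Disjoint (H j) (H k))
    (hpcover : ∀ v : V, ∃ k, v ∈ H k)
    (hccu : ∀ k, ∀ Cc : Set V, G.isCComponent Cc → (Cc ∩ ↑(H k)).Nonempty → Cc ⊆ ↑(H k))
    (A : Fin n → Finset V)
    (hAanc : ∀ k, ↑(A k) ⊆ G.ancestors ↑(H k) \ ↑(H k))
    (hAprev : ∀ k, A k ⊆ (Finset.univ.filter fun j => j < k).biUnion H)
    (M Q : SCM V Val G) (hpos : M.positive)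
    (htopo : ∀ j k : Fin n, hEdge M (H j) (H k) → j < k)
    (hmod : ∀ k, ∀ y : V → Val,
      M.Pm (G.parentsF (H k ∪ A k)) y (H k ∪ A k) y =
        M.cond ∅ y (H k ∪ A k) (G.parentsF (H k ∪ A k)) y)
    (hmatch : ∀ k, ∀ y : V → Val,
      Q.Pm (G.parentsF (H k ∪ A k)) y (H k ∪ A k) y =
        M.cond ∅ y (H k ∪ A k) (G.parentsF (H k ∪ A k)) y) :
    ∀ y : V → Val, Q.P ∅ y y = M.P ∅ y y :=
  modular_training_matches_joint_general G H hpdisj hpcover hccu A M Q hpos hmod hmatch
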